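/- arXiv:1807.05421 — 3 statements merged into one kernel-verified Lean document; each statement's English description precedes it below -/
import Mathlib

section
/- Let L be a real Banach space, let (T_t)_{t≥0} and, for each n ∈ ℕ, (Tⁿ_t)_{t≥0} be strongly continuous contraction semigroups on L, and let (ε_n) be a sequence of nonnegative reals with ε_n → 0 such that ‖T_t f − Tⁿ_t f‖ ≤ ε_n · t · ‖f‖ for all t ≥ 0, n ∈ ℕ and f ∈ L. Let C be a dense linear subspace of L with C ⊆ D(𝓛) and such that Tⁿ_t f ∈ C for every t ≥ 0, n ∈ ℕ and f ∈ C, where 𝓛 is the generator of (T_t)_{t≥0}. Then C is a core for 𝓛: for every f ∈ D(𝓛) there exists a sequence (f_k) in C with f_k → f and 𝓛 f_k → 𝓛 f in L. -/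
open Filter

/-- A strongly continuous contraction semigroup on a real normed space. -/
def IsContractionSemigroup {L : Type*} [NormedAddCommGroup L] [NormedSpace ℝ L]
    (T : ℝ → L →L[ℝ] L) : Prop :=
  T 0 = ContinuousLinearMap.id ℝ L ∧
  (∀ s t : ℝ, 0 ≤ s → 0 ≤ t → T (s + t) = (T s).comp (T t)) ∧
  (∀ t : ℝ, 0 ≤ t → ∀ f : L, ‖T t f‖ ≤ ‖f‖) ∧
  (∀ f : L, Tendsto (fun t : ℝ => T t f) (nhdsWithin 0 (Set.Ioi 0)) (nhds f))

/-- `f` belongs to the domain of the generator of `T` with `𝓛 f = g`. -/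
def InGenerator {L : Type*} [NormedAddCommGroup L] [NormedSpace ℝ L]
    (T : ℝ → L →L[ℝ] L) (f g : L) : Prop :=
  Tendsto (fun t : ℝ => t⁻¹ • (T t f - f)) (nhdsWithin 0 (Set.Ioi 0)) (nhds g)

/-- Norm of an average is bounded by a bound on the terms. -/
lemma avg_norm_le {L : Type*} [NormedAddCommGroup L] [NormedSpace ℝ L]
    {m : ℕ} (hm : 0 < m) {u : ℕ → L} {B : ℝ} (hB : ∀ j < m, ‖u j‖ ≤ B) :
    ‖(m:ℝ)⁻¹ • ∑ j ∈ Finset.range m, u j‖ ≤ B := by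
  have hBnn : 0 ≤ B := le_trans (norm_nonneg _) (hB 0 hm)
  have h1 : ‖∑ j ∈ Finset.range m, u j‖ ≤ (m:ℝ) * B := by
    calc ‖∑ j ∈ Finset.range m, u j‖ ≤ ∑ j ∈ Finset.range m, ‖u j‖ := norm_sum_le _ _
    _ ≤ ∑ _j ∈ Finset.range m, B :=
        Finset.sum_le_sum fun j hj => hB j (Finset.mem_range.mp hj)
    _ = (m:ℝ) * B := by simp [mul_comm]
  have hmpos : (0:ℝ) < (m:ℝ) := by exact_mod_cast hm
  rw [norm_smul, Real.norm_eq_abs, abs_of_pos (inv_pos.mpr hmpos)]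
  calc (m:ℝ)⁻¹ * ‖∑ j ∈ Finset.range m, u j‖ ≤ (m:ℝ)⁻¹ * ((m:ℝ) * B) := by
        exact mul_le_mul_of_nonneg_left h1 (by positivity)
  _ = B := by field_simp

set_option maxHeartbeats 2000000 in
lemma approx_step
    {L : Type*} [NormedAddCommGroup L] [NormedSpace ℝ L]
    (T : ℝ → L →L[ℝ] L) (Tn : ℕ → ℝ → L →L[ℝ] L)
    (hT : IsContractionSemigroup T) (hTn : ∀ n, IsContractionSemigroup (Tn n))
    (ε : ℕ → ℝ) (hεnonneg : ∀ n, 0 ≤ ε n)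
    (hεlim : Tendsto ε atTop (nhds 0))
    (hclose : ∀ n : ℕ, ∀ t : ℝ, 0 ≤ t → ∀ f : L, ‖T t f - Tn n t f‖ ≤ ε n * t * ‖f‖)
    (C : Submodule ℝ L) (hCdense : Dense (C : Set L))
    (hCdom : ∀ f ∈ C, ∃ g : L, InGenerator T f g)
    (hCinv : ∀ n : ℕ, ∀ t : ℝ, 0 ≤ t → ∀ f ∈ C, Tn n t f ∈ C)
    (f g : L) (hf : InGenerator T f g) (δ : ℝ) (hδ : 0 < δ) :
    ∃ f' g', f' ∈ C ∧ InGenerator T f' g' ∧ ‖f' - f‖ ≤ δ ∧ ‖g' - g‖ ≤ δ := by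
  obtain ⟨hT0, hTadd, hTcontr, hTcont⟩ := hT
  -- Step 1: choose t
  have hEv : ∀ᶠ s in nhdsWithin (0:ℝ) (Set.Ioi 0),
      ‖s⁻¹ • (T s f - f) - g‖ ≤ δ/8 ∧ ‖T s f - f‖ ≤ δ/8 := by
    have e1 : ∀ᶠ s in nhdsWithin (0:ℝ) (Set.Ioi 0), dist (s⁻¹ • (T s f - f)) g < δ/8 :=
      hf (Metric.ball_mem_nhds g (by positivity))
    have e2 : ∀ᶠ s in nhdsWithin (0:ℝ) (Set.Ioi 0), dist (T s f) f < δ/8 :=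
      hTcont f (Metric.ball_mem_nhds f (by positivity))
    filter_upwards [e1, e2] with s h1 h2
    rw [dist_eq_norm] at h1 h2
    exact ⟨h1.le, h2.le⟩
  obtain ⟨u, hu, hsubu⟩ := mem_nhdsGT_iff_exists_Ioo_subset.mp hEv
  set t : ℝ := u/2 with ht_def
  have htpos : 0 < t := by simp only [ht_def]; exact half_pos hu
  have hP : ∀ s : ℝ, 0 < s → s ≤ t →
      ‖s⁻¹ • (T s f - f) - g‖ ≤ δ/8 ∧ ‖T s f - f‖ ≤ δ/8 := by
    intro s hs1 hs2
    exact hsubu ⟨hs1, lt_of_le_of_lt hs2 (by simp only [ht_def]; linarith [hu.out])⟩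
  -- Step 2: choose h ∈ C
  have hρ1 : (0:ℝ) < min (δ/8) (δ*t/16) := by positivity
  obtain ⟨h, hhC, hhf⟩ : ∃ h ∈ C, ‖h - f‖ ≤ min (δ/8) (δ*t/16) := by
    obtain ⟨h, hh1, hh2⟩ := Metric.mem_closure_iff.mp (hCdense f) _ hρ1
    exact ⟨h, hh1, by rw [← dist_eq_norm, dist_comm]; exact hh2.le⟩
  have hhf1 : ‖h - f‖ ≤ δ/8 := le_trans hhf (min_le_left _ _)
  have hhf2 : ‖h - f‖ ≤ δ*t/16 := le_trans hhf (min_le_right _ _)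
  -- Step 3: y
  obtain ⟨y, hy⟩ := hCdom h hhC
  -- Step 4: choose n
  have hρ2 : (0:ℝ) < min (δ/(16*(‖h‖+1))) (δ/(4*t*(‖h‖+1))) := by positivity
  obtain ⟨n, hn⟩ : ∃ n, ε n < min (δ/(16*(‖h‖+1))) (δ/(4*t*(‖h‖+1))) :=
    (hεlim.eventually_lt_const hρ2).exists
  have hεh : ε n * ‖h‖ ≤ δ/16 := by
    have h1 : ε n ≤ δ/(16*(‖h‖+1)) := le_of_lt (lt_of_lt_of_le hn (min_le_left _ _))
    have h2 : 0 < ‖h‖ + 1 := by positivity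
    have := mul_le_mul_of_nonneg_right h1 (le_of_lt h2)
    calc ε n * ‖h‖ ≤ ε n * (‖h‖+1) :=
          mul_le_mul_of_nonneg_left (by linarith) (hεnonneg n)
    _ ≤ δ/(16*(‖h‖+1)) * (‖h‖+1) := this
    _ = δ/16 := by field_simp
  have hεth : ε n * t * ‖h‖ ≤ δ/4 := by
    have h1 : ε n ≤ δ/(4*t*(‖h‖+1)) := le_of_lt (lt_of_lt_of_le hn (min_le_right _ _))
    have h2 : 0 < ‖h‖ + 1 := by positivity
    have h3 : ε n * t * (‖h‖+1) ≤ δ/(4*t*(‖h‖+1)) * t * (‖h‖+1) := by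
      have := mul_le_mul_of_nonneg_right h1 htpos.le
      exact mul_le_mul_of_nonneg_right this h2.le
    have h4 : δ/(4*t*(‖h‖+1)) * t * (‖h‖+1) = δ/4 := by field_simp
    calc ε n * t * ‖h‖ ≤ ε n * t * (‖h‖+1) := by
          apply mul_le_mul_of_nonneg_left (by linarith)
          exact mul_nonneg (hεnonneg n) htpos.le
    _ ≤ δ/4 := by rw [← h4]; exact h3
  -- Step 5: choose r₀ (called u₂)
  have hηset : ∀ᶠ r in nhdsWithin (0:ℝ) (Set.Ioi 0), ‖r⁻¹ • (T r h - h) - y‖ ≤ δ/8 := by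
    have e3 : ∀ᶠ r in nhdsWithin (0:ℝ) (Set.Ioi 0), dist (r⁻¹ • (T r h - h)) y < δ/8 :=
      hy (Metric.ball_mem_nhds y (by positivity))
    filter_upwards [e3] with r hr
    rw [dist_eq_norm] at hr; exact hr.le
  obtain ⟨u₂, hu₂, hsub₂⟩ := mem_nhdsGT_iff_exists_Ioo_subset.mp hηset
  have hη2 : ∀ r : ℝ, 0 < r → r < u₂ → ‖r⁻¹ • (T r h - h) - y‖ ≤ δ/8 :=
    fun r h1 h2 => hsub₂ ⟨h1, h2⟩
  -- Step 6: choose m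
  obtain ⟨m, hm⟩ := exists_nat_gt (t / u₂)
  have hu₂pos : 0 < u₂ := hu₂.out
  have hmpos : 0 < m := by
    by_contra hc
    push_neg at hc
    interval_cases m
    simp only [Nat.cast_zero] at hm
    exact absurd hm (not_lt.mpr (by positivity))
  have hmR : (0:ℝ) < (m:ℝ) := by exact_mod_cast hmpos
  set r1 : ℝ := t / m with hr1_def
  have hr1pos : 0 < r1 := by positivity
  have hr1lt : r1 < u₂ := by
    rw [hr1_def, div_lt_iff₀ hmR]
    calc t = (t/u₂) * u₂ := by field_simp
    _ < (m:ℝ) * u₂ := by exact mul_lt_mul_of_pos_right hm hu₂pos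
    _ = u₂ * m := mul_comm _ _
  set s : ℕ → ℝ := fun j => (j:ℝ) * r1 with hs_def
  have hsnonneg : ∀ j : ℕ, 0 ≤ s j := fun j => by positivity
  have hsle : ∀ j : ℕ, j ≤ m → s j ≤ t := by
    intro j hj
    have : s j ≤ (m:ℝ) * r1 := by
      apply mul_le_mul_of_nonneg_right _ hr1pos.le
      exact_mod_cast hj
    calc s j ≤ (m:ℝ) * r1 := this
    _ = t := by rw [hr1_def]; field_simp
  obtain ⟨hS0, hSadd, hScontr, _⟩ := hTn n
  -- commutation of Tn with itself
  have hcomm : ∀ r : ℝ, 0 ≤ r → ∀ j : ℕ, Tn n r (Tn n (s j) h) = Tn n (s j) (Tn n r h) := by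
    intro r hr j
    have h1 := hSadd r (s j) hr (hsnonneg j)
    have h2 := hSadd (s j) r (hsnonneg j) hr
    rw [add_comm] at h1
    have := h1.symm.trans h2
    calc Tn n r (Tn n (s j) h) = ((Tn n r).comp (Tn n (s j))) h := rfl
    _ = ((Tn n (s j)).comp (Tn n r)) h := by rw [← h1, ← h2]
    _ = Tn n (s j) (Tn n r h) := rfl
  -- the difference-quotient replacement bound
  have hrep : ∀ r : ℝ, 0 < r → ∀ x : L, ‖r⁻¹ • (T r x - Tn n r x)‖ ≤ ε n * ‖x‖ := by
    intro r hr x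
    rw [norm_smul, Real.norm_eq_abs, abs_of_pos (inv_pos.mpr hr)]
    calc r⁻¹ * ‖T r x - Tn n r x‖ ≤ r⁻¹ * (ε n * r * ‖x‖) :=
          mul_le_mul_of_nonneg_left (hclose n r hr.le x) (by positivity)
    _ = ε n * ‖x‖ := by field_simp
  -- definitions
  set f' : L := (m:ℝ)⁻¹ • ∑ j ∈ Finset.range m, Tn n (s j) h with hf'_def
  have hf'C : f' ∈ C := by
    apply Submodule.smul_mem
    exact Submodule.sum_mem _ fun j _ => hCinv n (s j) (hsnonneg j) h hhC
  obtain ⟨g', hg'⟩ := hCdom f' hf'C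
  set w : L := (m:ℝ)⁻¹ • ∑ j ∈ Finset.range m, Tn n (s j) y with hw_def
  refine ⟨f', g', hf'C, hg', ?_, ?_⟩
  · -- ‖f' - f‖ ≤ δ
    have key : f' - f = (m:ℝ)⁻¹ • ∑ j ∈ Finset.range m, (Tn n (s j) h - f) := by
      rw [hf'_def, Finset.sum_sub_distrib, smul_sub]
      congr 1
      rw [Finset.sum_const, Finset.card_range, ← Nat.cast_smul_eq_nsmul ℝ, smul_smul]
      rw [inv_mul_cancel₀ hmR.ne', one_smul]
    rw [key]
    have B_le : ε n * t * ‖h‖ + ‖h - f‖ + δ/8 ≤ δ := by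
      have : ‖h - f‖ ≤ δ/8 := hhf1
      linarith
    refine le_trans (avg_norm_le hmpos ?_) B_le
    intro j hj
    rcases Nat.eq_zero_or_pos j with hj0 | hjpos
    · subst hj0
      have : s 0 = 0 := by simp [hs_def]
      rw [this, hS0]
      simp only [ContinuousLinearMap.id_apply]
      have h1 : (0:ℝ) ≤ ε n * t * ‖h‖ :=
        mul_nonneg (mul_nonneg (hεnonneg n) htpos.le) (norm_nonneg h)
      have h2 : (0:ℝ) ≤ δ/8 := by positivity
      linarith [hhf1]
    · have hsj_pos : 0 < s j := by
        apply mul_pos _ hr1pos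
        exact_mod_cast hjpos
      have hsj_le : s j ≤ t := hsle j (le_of_lt hj)
      have tri : Tn n (s j) h - f =
          (Tn n (s j) h - T (s j) h) + (T (s j) h - T (s j) f) + (T (s j) f - f) := by abel
      rw [tri]
      refine le_trans (norm_add₃_le) ?_
      have b1 : ‖Tn n (s j) h - T (s j) h‖ ≤ ε n * t * ‖h‖ := by
        rw [norm_sub_rev]
        calc ‖T (s j) h - Tn n (s j) h‖ ≤ ε n * (s j) * ‖h‖ :=
              hclose n (s j) hsj_pos.le h
        _ ≤ ε n * t * ‖h‖ := by
              apply mul_le_mul_of_nonneg_right _ (norm_nonneg h)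
              exact mul_le_mul_of_nonneg_left hsj_le (hεnonneg n)
      have b2 : ‖T (s j) h - T (s j) f‖ ≤ ‖h - f‖ := by
        rw [← map_sub]
        exact hTcontr (s j) hsj_pos.le (h - f)
      have b3 : ‖T (s j) f - f‖ ≤ δ/8 := (hP (s j) hsj_pos hsj_le).2
      linarith
  · -- ‖g' - g‖ ≤ δ
    -- (a) ‖g' - w‖ ≤ 2 * (ε n * ‖h‖)
    have hηlim : Tendsto (fun r : ℝ => ‖r⁻¹ • (T r h - h) - y‖)
        (nhdsWithin (0:ℝ) (Set.Ioi 0)) (nhds 0) := by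
      have := (hy.sub (tendsto_const_nhds (x := y))).norm
      simpa using this
    have hg'w : ‖g' - w‖ ≤ 2 * (ε n * ‖h‖) := by
      have hA : Tendsto (fun r : ℝ => ‖r⁻¹ • (T r f' - f') - w‖)
          (nhdsWithin (0:ℝ) (Set.Ioi 0)) (nhds ‖g' - w‖) :=
        ((hg'.sub (tendsto_const_nhds (x := w))).norm)
      have hB : Tendsto (fun r : ℝ => 2 * (ε n * ‖h‖) + ‖r⁻¹ • (T r h - h) - y‖)
          (nhdsWithin (0:ℝ) (Set.Ioi 0)) (nhds (2 * (ε n * ‖h‖) + 0)) :=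
        tendsto_const_nhds.add hηlim
      have hpt : ∀ᶠ r in nhdsWithin (0:ℝ) (Set.Ioi 0),
          ‖r⁻¹ • (T r f' - f') - w‖ ≤ 2 * (ε n * ‖h‖) + ‖r⁻¹ • (T r h - h) - y‖ := by
        filter_upwards [self_mem_nhdsWithin] with r hr
        have hrpos : 0 < r := hr
        have hkey : r⁻¹ • (T r f' - f') - w = (m:ℝ)⁻¹ • ∑ j ∈ Finset.range m,
            (r⁻¹ • (T r (Tn n (s j) h) - Tn n (s j) h) - Tn n (s j) y) := by
          have e1 : ∑ j ∈ Finset.range m,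
              (r⁻¹ • (T r (Tn n (s j) h) - Tn n (s j) h) - Tn n (s j) y)
              = r⁻¹ • (∑ j ∈ Finset.range m, T r (Tn n (s j) h)) -
                r⁻¹ • (∑ j ∈ Finset.range m, Tn n (s j) h) -
                ∑ j ∈ Finset.range m, Tn n (s j) y := by
            simp only [smul_sub, Finset.sum_sub_distrib, Finset.smul_sum]
          have e2 : T r f' = (m:ℝ)⁻¹ • ∑ j ∈ Finset.range m, T r (Tn n (s j) h) := by
            rw [hf'_def, map_smul, map_sum]
          rw [e1, e2, hf'_def, hw_def]
          module
        rw [hkey]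
        apply avg_norm_le hmpos
        intro j hj
        set x := Tn n (s j) h with hx_def
        have hxh : ‖x‖ ≤ ‖h‖ := hScontr (s j) (hsnonneg j) h
        have tri : r⁻¹ • (T r x - x) - Tn n (s j) y =
            (r⁻¹ • (T r x - x) - r⁻¹ • (Tn n r x - x)) +
            (Tn n (s j) (r⁻¹ • (Tn n r h - h)) - Tn n (s j) (r⁻¹ • (T r h - h))) +
            (Tn n (s j) (r⁻¹ • (T r h - h)) - Tn n (s j) y) := by
          have hb : r⁻¹ • (Tn n r x - x) = Tn n (s j) (r⁻¹ • (Tn n r h - h)) := by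
            rw [map_smul, map_sub]
            congr 1
            rw [hx_def, hcomm r hrpos.le j]
          rw [hb]; abel
        rw [tri]
        refine le_trans (norm_add₃_le) ?_
        have b1 : ‖r⁻¹ • (T r x - x) - r⁻¹ • (Tn n r x - x)‖ ≤ ε n * ‖h‖ := by
          rw [← smul_sub]
          have heq : (T r x - x) - (Tn n r x - x) = T r x - Tn n r x := by abel
          rw [heq]
          exact le_trans (hrep r hrpos x)
            (mul_le_mul_of_nonneg_left hxh (hεnonneg n))
        have b2 : ‖Tn n (s j) (r⁻¹ • (Tn n r h - h)) - Tn n (s j) (r⁻¹ • (T r h - h))‖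
            ≤ ε n * ‖h‖ := by
          rw [← map_sub, ← smul_sub]
          have heq : (Tn n r h - h) - (T r h - h) = Tn n r h - T r h := by abel
          rw [heq]
          refine le_trans (hScontr (s j) (hsnonneg j) _) ?_
          rw [show (Tn n r h - T r h) = -(T r h - Tn n r h) by abel, smul_neg, norm_neg]
          exact hrep r hrpos h
        have b3 : ‖Tn n (s j) (r⁻¹ • (T r h - h)) - Tn n (s j) y‖
            ≤ ‖r⁻¹ • (T r h - h) - y‖ := by
          rw [← map_sub]
          exact hScontr (s j) (hsnonneg j) _
        linarith
      have := le_of_tendsto_of_tendsto hA hB hpt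
      simpa using this
    -- (b) ‖t⁻¹ • (Tn n t h - h) - w‖ ≤ ε n * ‖h‖ + δ/8
    have htel : Tn n t h - h = ∑ j ∈ Finset.range m, Tn n (s j) (Tn n r1 h - h) := by
      have step : ∀ j ∈ Finset.range m,
          Tn n (s j) (Tn n r1 h - h) = Tn n (s (j+1)) h - Tn n (s j) h := by
        intro j _
        rw [map_sub]
        congr 1
        have hadd : s (j+1) = s j + r1 := by
          simp only [hs_def]
          push_cast
          ring
        rw [hadd, hSadd (s j) r1 (hsnonneg j) hr1pos.le]
        rfl
      rw [Finset.sum_congr rfl step, Finset.sum_range_sub (fun j => Tn n (s j) h)]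
      have hsm : s m = t := by
        simp only [hs_def, hr1_def]
        field_simp
      have hs0 : s 0 = 0 := by simp [hs_def]
      rw [hsm, hs0, hS0]
      rfl
    have hbw : ‖t⁻¹ • (Tn n t h - h) - w‖ ≤ ε n * ‖h‖ + δ/8 := by
      have hkey : t⁻¹ • (Tn n t h - h) - w = (m:ℝ)⁻¹ • ∑ j ∈ Finset.range m,
          (Tn n (s j) (r1⁻¹ • (Tn n r1 h - h)) - Tn n (s j) y) := by
        rw [htel, hw_def, Finset.sum_sub_distrib, smul_sub]
        congr 1
        rw [Finset.smul_sum, Finset.smul_sum]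
        congr 1
        funext j
        rw [map_smul, smul_smul]
        congr 1
        rw [hr1_def]
        field_simp
      rw [hkey]
      apply avg_norm_le hmpos
      intro j _
      have tri : Tn n (s j) (r1⁻¹ • (Tn n r1 h - h)) - Tn n (s j) y =
          Tn n (s j) (r1⁻¹ • (Tn n r1 h - h) - y) := by rw [map_sub]
      rw [tri]
      refine le_trans (hScontr (s j) (hsnonneg j) _) ?_
      have tri2 : r1⁻¹ • (Tn n r1 h - h) - y =
          (r1⁻¹ • (Tn n r1 h - h) - r1⁻¹ • (T r1 h - h)) + (r1⁻¹ • (T r1 h - h) - y) := by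
        abel
      rw [tri2]
      refine le_trans (norm_add_le _ _) ?_
      have c1 : ‖r1⁻¹ • (Tn n r1 h - h) - r1⁻¹ • (T r1 h - h)‖ ≤ ε n * ‖h‖ := by
        rw [← smul_sub]
        have heq : (Tn n r1 h - h) - (T r1 h - h) = -(T r1 h - Tn n r1 h) := by abel
        rw [heq, smul_neg, norm_neg]
        exact hrep r1 hr1pos h
      have c2 : ‖r1⁻¹ • (T r1 h - h) - y‖ ≤ δ/8 := hη2 r1 hr1pos hr1lt
      linarith
    -- (c) ‖t⁻¹ • (Tn n t h - h) - g‖ ≤ ε n * ‖h‖ + δ/4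
    have hbg : ‖t⁻¹ • (Tn n t h - h) - g‖ ≤ ε n * ‖h‖ + δ/8 + δ/8 := by
      have tri : t⁻¹ • (Tn n t h - h) - g =
          (t⁻¹ • (Tn n t h - h) - t⁻¹ • (T t h - h)) +
          (t⁻¹ • (T t h - h) - t⁻¹ • (T t f - f)) +
          (t⁻¹ • (T t f - f) - g) := by abel
      rw [tri]
      refine le_trans (norm_add₃_le) ?_
      have c1 : ‖t⁻¹ • (Tn n t h - h) - t⁻¹ • (T t h - h)‖ ≤ ε n * ‖h‖ := by
        rw [← smul_sub]
        have heq : (Tn n t h - h) - (T t h - h) = -(T t h - Tn n t h) := by abel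
        rw [heq, smul_neg, norm_neg]
        exact hrep t htpos h
      have c2 : ‖t⁻¹ • (T t h - h) - t⁻¹ • (T t f - f)‖ ≤ δ/8 := by
        rw [← smul_sub]
        have heq : (T t h - h) - (T t f - f) = T t (h - f) - (h - f) := by
          rw [map_sub]; abel
        rw [heq, norm_smul, Real.norm_eq_abs, abs_of_pos (inv_pos.mpr htpos)]
        have hb : ‖T t (h-f) - (h-f)‖ ≤ 2 * ‖h - f‖ := by
          refine le_trans (norm_sub_le _ _) ?_
          have := hTcontr t htpos.le (h - f)
          linarith
        calc t⁻¹ * ‖T t (h-f) - (h-f)‖ ≤ t⁻¹ * (2 * ‖h - f‖) :=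
              mul_le_mul_of_nonneg_left hb (by positivity)
        _ ≤ t⁻¹ * (2 * (δ*t/16)) := by
              apply mul_le_mul_of_nonneg_left _ (by positivity)
              linarith [hhf2]
        _ = δ/8 := by field_simp; ring
      have c3 : ‖t⁻¹ • (T t f - f) - g‖ ≤ δ/8 := (hP t htpos le_rfl).1
      linarith
    -- combine
    have tri : g' - g = (g' - w) + (w - t⁻¹ • (Tn n t h - h)) + (t⁻¹ • (Tn n t h - h) - g) := by
      abel
    rw [tri]
    refine le_trans (norm_add₃_le) ?_
    rw [norm_sub_rev] at hbw
    linarith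

theorem core_of_approximating_semigroups
    {L : Type*} [NormedAddCommGroup L] [NormedSpace ℝ L] [CompleteSpace L]
    (T : ℝ → L →L[ℝ] L) (Tn : ℕ → ℝ → L →L[ℝ] L)
    (hT : IsContractionSemigroup T) (hTn : ∀ n, IsContractionSemigroup (Tn n))
    (ε : ℕ → ℝ) (hεnonneg : ∀ n, 0 ≤ ε n)
    (hεlim : Tendsto ε atTop (nhds 0))
    (hclose : ∀ n : ℕ, ∀ t : ℝ, 0 ≤ t → ∀ f : L, ‖T t f - Tn n t f‖ ≤ ε n * t * ‖f‖)
    (C : Submodule ℝ L) (hCdense : Dense (C : Set L))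
    (hCdom : ∀ f ∈ C, ∃ g : L, InGenerator T f g)
    (hCinv : ∀ n : ℕ, ∀ t : ℝ, 0 ≤ t → ∀ f ∈ C, Tn n t f ∈ C)
    (f g : L) (hf : InGenerator T f g) :
    ∃ fk gk : ℕ → L, (∀ k, fk k ∈ C) ∧ (∀ k, InGenerator T (fk k) (gk k)) ∧
      Tendsto fk atTop (nhds f) ∧ Tendsto gk atTop (nhds g) := by
  have key : ∀ k : ℕ, ∃ f' g', f' ∈ C ∧ InGenerator T f' g' ∧
      ‖f' - f‖ ≤ 1/((k:ℝ)+1) ∧ ‖g' - g‖ ≤ 1/((k:ℝ)+1) := by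
    intro k
    exact approx_step T Tn hT hTn ε hεnonneg hεlim hclose C hCdense hCdom hCinv f g hf
      (1/((k:ℝ)+1)) (by positivity)
  choose fk gk hmem hgen hfc hgc using key
  refine ⟨fk, gk, hmem, hgen, ?_, ?_⟩
  · rw [tendsto_iff_norm_sub_tendsto_zero]
    exact squeeze_zero (fun k => norm_nonneg _) hfc tendsto_one_div_add_atTop_nhds_zero_nat
  · rw [tendsto_iff_norm_sub_tendsto_zero]
    exact squeeze_zero (fun k => norm_nonneg _) hgc tendsto_one_div_add_atTop_nhds_zero_nat
end

section
/- Let d ≥ 1, let U : ℝ^d → ℝ be continuously differentiable with ∫_{ℝ^d} (1 + ‖∇U(x)‖) e^{−U(x)} dx < ∞, let λ_c > 0, and let μ_ν be a rotation invariant probability measure on ℝ^d with ∫ ‖y‖ dμ_ν(y) < ∞. For x, y ∈ ℝ^d set R(x,y) = R_{∇U(x)}(y). Then for every continuously differentiable compactly supported f : ℝ^d × ℝ^d → ℝ, ∫_{ℝ^d} ∫_{ℝ^d} [ ⟨y, ∇_x f(x,y)⟩ + (⟨y, ∇U(x)⟩)₊ (f(x, R(x,y)) − f(x,y)) + λ_c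 ( ∫_{ℝ^d} f(x,w) dμ_ν(w) − f(x,y) ) ] e^{−U(x)} dμ_ν(y) dx = 0. -/
/-!
Integrate out `y` first. The refreshment term vanishes since `μν` is a probability measure. The
bounce map `R_{∇U(x)}` is a reflection, so it preserves `μν` and flips the sign of
`⟪y, ∇U(x)⟫`; hence the bounce term integrates to `-∫ ⟪y, ∇U(x)⟫ f(x, y) dμν(y)`. After
multiplying by `e^{-U(x)}` what is left is `∫ D(f e^{-U})(x, y) (y, 0) dμν(y)`, the derivative of
the compactly supported function `f e^{-U}` in the direction `(y, 0)`. Swapping the integrals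
(the integrand is continuous with compact support), its `x`-integral vanishes for each `y` by
integration by parts.
-/

open MeasureTheory
open scoped InnerProductSpace

/-- The bounce map `R_g(y) = y - 2 (⟪g,y⟫/‖g‖²) g` (identity when `g = 0`). -/
noncomputable def bounce {E : Type*} [NormedAddCommGroup E] [InnerProductSpace ℝ E]
    (g y : E) : E :=
  letI := Classical.dec (g = 0)
  if g = 0 then y else y - ((2 * ⟪g, y⟫_ℝ) / ‖g‖ ^ 2) • g

section Bounce

variable {E : Type*} [NormedAddCommGroup E] [InnerProductSpace ℝ E]

theorem bounce_eq_reflection (g : E) : bounce g = (ℝ ∙ g)ᗮ.reflection := by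
  funext y
  by_cases hg : g = 0
  · subst hg
    simpa [bounce] using (Submodule.reflection_mem_subspace_eq_self Submodule.mem_top).symm
  rw [bounce, if_neg hg, Submodule.reflection_apply, Submodule.starProjection_orthogonal_val,
    Submodule.starProjection_singleton]
  simp only [RCLike.ofReal_real_eq_id, id_eq]
  module

theorem inner_bounce_left (g y : E) : ⟪bounce g y, g⟫_ℝ = -⟪y, g⟫_ℝ := by
  by_cases hg : g = 0
  · simp [hg]
  have : ‖g‖ ^ 2 ≠ 0 := by positivity
  rw [bounce, if_neg hg, inner_sub_left, real_inner_smul_left, real_inner_self_eq_norm_sq,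
    real_inner_comm]
  field_simp
  ring

theorem isClosedEmbedding_bounce (g : E) : Topology.IsClosedEmbedding (bounce g) := by
  rw [bounce_eq_reflection]
  exact (ℝ ∙ g)ᗮ.reflection.toHomeomorph.isClosedEmbedding

theorem measurePreserving_bounce [MeasurableSpace E] [BorelSpace E] {μ : Measure E}
    (hμ : ∀ O : E ≃ₗᵢ[ℝ] E, μ.map O = μ) (g : E) : MeasurePreserving (bounce g) μ μ :=
  ⟨(isClosedEmbedding_bounce g).continuous.measurable, by rw [bounce_eq_reflection]; exact hμ _⟩

end Bounce

section BounceIntegral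

variable {E : Type*} [NormedAddCommGroup E] [InnerProductSpace ℝ E] [MeasurableSpace E]
  [BorelSpace E] {μ : Measure E} {g : E}

theorem integrable_max_inner_mul {φ : E → ℝ} (hφ : Integrable (fun y => ⟪y, g⟫_ℝ * φ y) μ) :
    Integrable (fun y => max ⟪y, g⟫_ℝ 0 * φ y) μ := by
  have hmeas : MeasurableSet {y : E | 0 ≤ ⟪y, g⟫_ℝ} :=
    measurableSet_le measurable_const (continuous_id.inner continuous_const).measurable
  refine (hφ.indicator hmeas).congr (.of_forall fun y => ?_)
  by_cases hy : 0 ≤ ⟪y, g⟫_ℝ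
  · simp [hy]
  · simp [hy, (not_le.mp hy).le]

theorem integral_max_inner_mul_sub_comp_bounce (hμ : MeasurePreserving (bounce g) μ μ)
    {φ : E → ℝ} (hφ : Integrable (fun y => ⟪y, g⟫_ℝ * φ y) μ) :
    ∫ y, max ⟪y, g⟫_ℝ 0 * (φ (bounce g y) - φ y) ∂μ = -∫ y, ⟪y, g⟫_ℝ * φ y ∂μ := by
  have hpos := integrable_max_inner_mul hφ
  have hneg : Integrable (fun y => max (-⟪y, g⟫_ℝ) 0 * φ y) μ := by
    simpa only [inner_neg_right] using integrable_max_inner_mul (g := -g) (by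
      simpa only [inner_neg_right, neg_mul] using hφ.fun_neg)
  have hflip : (fun y => max ⟪y, g⟫_ℝ 0 * φ (bounce g y))
      = (fun y => max (-⟪y, g⟫_ℝ) 0 * φ y) ∘ bounce g := by
    funext y
    simp [inner_bounce_left]
  have hemb := (isClosedEmbedding_bounce g).measurableEmbedding
  have hpos_bounce : Integrable (fun y => max ⟪y, g⟫_ℝ 0 * φ (bounce g y)) μ := by
    rw [hflip]
    exact (hμ.integrable_comp_emb hemb).mpr hneg
  calc ∫ y, max ⟪y, g⟫_ℝ 0 * (φ (bounce g y) - φ y) ∂μ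
      = ∫ y, max ⟪y, g⟫_ℝ 0 * φ (bounce g y) ∂μ - ∫ y, max ⟪y, g⟫_ℝ 0 * φ y ∂μ := by
        simp_rw [mul_sub]
        exact integral_sub hpos_bounce hpos
    _ = ∫ y, max (-⟪y, g⟫_ℝ) 0 * φ y ∂μ - ∫ y, max ⟪y, g⟫_ℝ 0 * φ y ∂μ := by
        rw [hflip]
        exact congrArg (· - _) (hμ.integral_comp hemb fun y => max (-⟪y, g⟫_ℝ) 0 * φ y)
    _ = ∫ y, -(⟪y, g⟫_ℝ * φ y) ∂μ := by
        rw [← integral_sub hneg hpos]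
        congr 1 with y
        rw [← sub_mul, ← neg_sub, max_zero_sub_max_neg_zero_eq_self, neg_mul]
    _ = -∫ y, ⟪y, g⟫_ℝ * φ y ∂μ := integral_neg _

end BounceIntegral

section Slices

variable {X Y α : Type*} [TopologicalSpace X] [TopologicalSpace Y] [Zero α] {f : X × Y → α}

theorem HasCompactSupport.comp_prodMk_left [T2Space X] (hf : HasCompactSupport f) (y : Y) :
    HasCompactSupport fun x => f (x, y) :=
  .intro (hf.image continuous_fst) fun x hx =>
    image_eq_zero_of_notMem_tsupport fun h => hx ⟨(x, y), h, rfl⟩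

theorem HasCompactSupport.comp_prodMk_right [T2Space Y] (hf : HasCompactSupport f) (x : X) :
    HasCompactSupport fun y => f (x, y) :=
  .intro (hf.image continuous_snd) fun y hy =>
    image_eq_zero_of_notMem_tsupport fun h => hy ⟨(x, y), h, rfl⟩

end Slices

section Divergence

variable {E F G : Type*} [NormedAddCommGroup E] [NormedSpace ℝ E] [NormedAddCommGroup F]
  [NormedSpace ℝ F] [NormedAddCommGroup G] [NormedSpace ℝ G]

theorem DifferentiableAt.fderiv_comp_prodMk_left_apply {H : E × F → G} {x : E} {y : F}
    (hH : DifferentiableAt ℝ H (x, y)) (v : E) :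
    fderiv ℝ (fun x' => H (x', y)) x v = fderiv ℝ H (x, y) (v, 0) := by
  have : HasFDerivAt (fun x' => H (x', y))
      ((fderiv ℝ H (x, y)).comp ((ContinuousLinearMap.id ℝ E).prod 0)) x :=
    hH.hasFDerivAt.comp x ((hasFDerivAt_id x).prodMk (hasFDerivAt_const y x))
  rw [this.fderiv]
  simp

theorem fderiv_mul_exp_neg_fst_apply {f : E × F → ℝ} {U : E → ℝ} {x : E} {y : F}
    (hf : DifferentiableAt ℝ f (x, y)) (hU : DifferentiableAt ℝ U x) (v : E) :
    fderiv ℝ (fun p => f p * Real.exp (-U p.1)) (x, y) (v, 0)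
      = (fderiv ℝ f (x, y) (v, 0) - fderiv ℝ U x v * f (x, y)) * Real.exp (-U x) := by
  have hweight : HasFDerivAt (fun p : E × F => Real.exp (-U p.1))
      (Real.exp (-U x) • -(fderiv ℝ U x).comp (ContinuousLinearMap.fst ℝ E F)) (x, y) :=
    ((hU.hasFDerivAt.comp (x, y) hasFDerivAt_fst).neg).exp
  rw [HasFDerivAt.fderiv (f := fun p => f p * Real.exp (-U p.1)) (hf.hasFDerivAt.mul hweight)]
  simp
  ring

variable [MeasurableSpace E] [BorelSpace E] [FiniteDimensional ℝ E] {μ : Measure E}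
  [μ.IsAddHaarMeasure]

theorem integral_fderiv_apply_eq_zero {h : E → ℝ} (hh : ContDiff ℝ 1 h) (hc : HasCompactSupport h)
    (v : E) : ∫ x, fderiv ℝ h x v ∂μ = 0 := by
  have hderiv : Integrable (fun x => fderiv ℝ h x v) μ :=
    ((hh.continuous_fderiv one_ne_zero).clm_apply continuous_const).integrable_of_hasCompactSupport
      (hc.fderiv_apply ℝ v)
  have hint : Integrable h μ := hh.continuous.integrable_of_hasCompactSupport hc
  -- integration by parts against the constant function `1`
  simpa using integral_mul_fderiv_eq_neg_fderiv_mul_of_integrable (f := fun _ => (1 : ℝ))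
    (g := h) (v := v) (by simp) (by simpa using hderiv) (by simpa using hint)
    (fun _ _ => differentiableAt_const _) (fun x _ => hh.differentiable one_ne_zero x)

theorem integral_integral_fderiv_apply_prodMk_zero_eq_zero [MeasurableSpace F]
    [OpensMeasurableSpace F] {ν : Measure F} [IsFiniteMeasureOnCompacts ν] {H : E × F → ℝ}
    (hH : ContDiff ℝ 1 H) (hHc : HasCompactSupport H) {w : F → E} (hw : Continuous w) :
    ∫ x, ∫ y, fderiv ℝ H (x, y) (w y, 0) ∂ν ∂μ = 0 := by
  have hcont : Continuous fun p : E × F => fderiv ℝ H p (w p.2, 0) :=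
    (hH.continuous_fderiv one_ne_zero).clm_apply ((hw.comp continuous_snd).prodMk continuous_const)
  have hsupp : HasCompactSupport fun p : E × F => fderiv ℝ H p (w p.2, 0) :=
    (hHc.fderiv ℝ).mono fun p hp h0 => hp (by simp [h0])
  rw [integral_integral_swap_of_hasCompactSupport (f := fun x y => fderiv ℝ H (x, y) (w y, 0))
    hcont hsupp]
  have hslice : ∀ y, ∫ x, fderiv ℝ H (x, y) (w y, 0) ∂μ = 0 := fun y => by
    simp_rw [← (hH.differentiable one_ne_zero _).fderiv_comp_prodMk_left_apply]
    exact integral_fderiv_apply_eq_zero (hH.comp (contDiff_id.prodMk contDiff_const))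
      (hHc.comp_prodMk_left y) (w y)
  simp [hslice]

end Divergence

section Generator

variable {E : Type*} [NormedAddCommGroup E] [InnerProductSpace ℝ E] [CompleteSpace E]
  [MeasurableSpace E] [BorelSpace E] {μ : Measure E} [IsProbabilityMeasure μ]

theorem integral_bps_generator_eq {f : E × E → ℝ} (hf : ContDiff ℝ 1 f) (hfc : HasCompactSupport f)
    {g : E} (hμ : MeasurePreserving (bounce g) μ μ) (lamc : ℝ) (x : E) :
    ∫ y, (⟪y, gradient (fun x' => f (x', y)) x⟫_ℝ
        + max ⟪y, g⟫_ℝ 0 * (f (x, bounce g y) - f (x, y))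
        + lamc * ((∫ w, f (x, w) ∂μ) - f (x, y))) ∂μ
      = ∫ y, (fderiv ℝ f (x, y) (y, 0) - ⟪y, g⟫_ℝ * f (x, y)) ∂μ := by
  have hfx : Continuous fun y => f (x, y) := hf.continuous.comp (.prodMk_right x)
  have hfxc : HasCompactSupport fun y => f (x, y) := hfc.comp_prodMk_right x
  have htransport : Integrable (fun y => fderiv ℝ f (x, y) (y, 0)) μ :=
    ((hf.continuous_fderiv one_ne_zero).comp (.prodMk_right x)).clm_apply
      (continuous_id.prodMk continuous_const) |>.integrable_of_hasCompactSupport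
      ((hfc.fderiv ℝ).comp_prodMk_right x |>.mono fun y hy h0 => hy (by simp [h0]))
  have hflux : Integrable (fun y => ⟪y, g⟫_ℝ * f (x, y)) μ :=
    ((continuous_id.inner continuous_const).mul hfx).integrable_of_hasCompactSupport
      hfxc.mul_left
  have hbounce : Integrable (fun y => max ⟪y, g⟫_ℝ 0 * (f (x, bounce g y) - f (x, y))) μ :=
    (((continuous_id.inner continuous_const).max continuous_const).mul
      ((hfx.comp (isClosedEmbedding_bounce g).continuous).sub hfx)).integrable_of_hasCompactSupport
      ((hfxc.comp_isClosedEmbedding (isClosedEmbedding_bounce g)).sub hfxc).mul_left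
  have hrefresh : Integrable (fun y => lamc * ((∫ w, f (x, w) ∂μ) - f (x, y))) μ :=
    ((integrable_const _).sub (hfx.integrable_of_hasCompactSupport hfxc)).const_mul lamc
  have hrefresh_zero : ∫ y, lamc * ((∫ w, f (x, w) ∂μ) - f (x, y)) ∂μ = 0 := by
    rw [integral_const_mul, integral_sub (integrable_const _)
      (hfx.integrable_of_hasCompactSupport hfxc)]
    simp
  have htransport_eq : ∀ y, ⟪y, gradient (fun x' => f (x', y)) x⟫_ℝ = fderiv ℝ f (x, y) (y, 0) :=
    fun y => by
      rw [inner_gradient_right, (hf.differentiable one_ne_zero _).fderiv_comp_prodMk_left_apply]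
      rfl
  simp_rw [htransport_eq]
  rw [integral_add (htransport.fun_add hbounce) hrefresh, integral_add htransport hbounce,
    hrefresh_zero, integral_max_inner_mul_sub_comp_bounce hμ hflux, integral_sub htransport hflux]
  ring

end Generator

theorem bps_invariance_general
    {d : ℕ}
    (U : EuclideanSpace ℝ (Fin d) → ℝ) (hU : ContDiff ℝ 1 U)
    (lamc : ℝ)
    (μν : Measure (EuclideanSpace ℝ (Fin d))) [IsProbabilityMeasure μν]
    (hrot : ∀ O : EuclideanSpace ℝ (Fin d) ≃ₗᵢ[ℝ] EuclideanSpace ℝ (Fin d),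
      Measure.map O μν = μν)
    (f : EuclideanSpace ℝ (Fin d) × EuclideanSpace ℝ (Fin d) → ℝ)
    (hf : ContDiff ℝ 1 f) (hfc : HasCompactSupport f) :
    ∫ x, ∫ y, (⟪y, gradient (fun x' => f (x', y)) x⟫_ℝ
        + max ⟪y, gradient U x⟫_ℝ 0 * (f (x, bounce (gradient U x) y) - f (x, y))
        + lamc * ((∫ w, f (x, w) ∂μν) - f (x, y))) * Real.exp (-U x) ∂μν = 0 := by
  set H := fun p : EuclideanSpace ℝ (Fin d) × EuclideanSpace ℝ (Fin d) =>
    f p * Real.exp (-U p.1)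
  have hH : ContDiff ℝ 1 H := hf.mul (hU.comp contDiff_fst).neg.exp
  have hfiber : ∀ x, ∫ y, (⟪y, gradient (fun x' => f (x', y)) x⟫_ℝ
        + max ⟪y, gradient U x⟫_ℝ 0 * (f (x, bounce (gradient U x) y) - f (x, y))
        + lamc * ((∫ w, f (x, w) ∂μν) - f (x, y))) * Real.exp (-U x) ∂μν
      = ∫ y, fderiv ℝ H (x, y) (y, 0) ∂μν := fun x => by
    rw [integral_mul_const, integral_bps_generator_eq hf hfc (measurePreserving_bounce hrot _),
      ← integral_mul_const]
    refine integral_congr_ae (.of_forall fun y => ?_)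
    simp only [H]
    rw [fderiv_mul_exp_neg_fst_apply (hf.differentiable one_ne_zero _)
      (hU.differentiable one_ne_zero _), inner_gradient_right]
    rfl
  rw [integral_congr_ae (.of_forall hfiber)]
  exact integral_integral_fderiv_apply_prodMk_zero_eq_zero hH hfc.mul_right continuous_id

theorem bps_invariance
    {d : ℕ} (hd : 1 ≤ d)
    (U : EuclideanSpace ℝ (Fin d) → ℝ) (hU : ContDiff ℝ 1 U)
    (hUint : Integrable (fun x => (1 + ‖gradient U x‖) * Real.exp (-U x)))
    (lamc : ℝ) (hlamc : 0 < lamc)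
    (μν : Measure (EuclideanSpace ℝ (Fin d))) [IsProbabilityMeasure μν]
    (hrot : ∀ O : EuclideanSpace ℝ (Fin d) ≃ₗᵢ[ℝ] EuclideanSpace ℝ (Fin d),
      Measure.map O μν = μν)
    (hmom : Integrable (fun y => ‖y‖) μν)
    (f : EuclideanSpace ℝ (Fin d) × EuclideanSpace ℝ (Fin d) → ℝ)
    (hf : ContDiff ℝ 1 f) (hfc : HasCompactSupport f) :
    ∫ x, ∫ y, (⟪y, gradient (fun x' => f (x', y)) x⟫_ℝ
        + max ⟪y, gradient U x⟫_ℝ 0 * (f (x, bounce (gradient U x) y) - f (x, y))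
        + lamc * ((∫ w, f (x, w) ∂μν) - f (x, y))) * Real.exp (-U x) ∂μν = 0 :=
  bps_invariance_general U hU lamc μν hrot f hf hfc
end

section
/- Let d ≥ 1, let μ be a rotation invariant probability measure on ℝ^d with ∫ ‖y‖ dμ(y) < ∞, let g ∈ ℝ^d and let h : ℝ^d → ℝ be bounded and measurable. Then ∫_{ℝ^d} (⟨y,g⟩)₊ ( h(R_g(y)) − h(y) ) dμ(y) = − ∫_{ℝ^d} ⟨y,g⟩ h(y) dμ(y). -/
/-!
The bounce map is the reflection in the hyperplane `g^⊥`: an involutive isometry, hence it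
preserves the rotation invariant measure `μ`, and it flips the sign of `⟪y, g⟫`. Substituting
`y ↦ R_g y` turns `∫ ⟪y,g⟫₊ h(R_g y)` into `∫ ⟪y,g⟫₋ h(y)`, and `⟪y,g⟫₋ - ⟪y,g⟫₊ = -⟪y,g⟫`.
-/

open MeasureTheory
open scoped InnerProductSpace

section Bounce

variable {E : Type*} [NormedAddCommGroup E] [InnerProductSpace ℝ E]

theorem bounce_involutive (g : E) : Function.Involutive (bounce g) := by
  rw [bounce_eq_reflection]
  exact Submodule.reflection_involutive _

end Bounce

theorem integral_posPart_mul_comp_sub_eq_neg_integral_mul {α : Type*} [MeasurableSpace α]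
    {μ : Measure α} {T : α → α} (hT : MeasurePreserving T μ μ) (hTT : Function.Involutive T)
    {φ h : α → ℝ} (hφT : ∀ x, φ (T x) = -φ x) (hφ : Integrable φ μ)
    (hh : AEStronglyMeasurable h μ) {C : ℝ} (hC : ∀ x, |h x| ≤ C) :
    ∫ x, max (φ x) 0 * (h (T x) - h x) ∂μ = -∫ x, φ x * h x ∂μ := by
  have hT_emb : MeasurableEmbedding T :=
    .of_measurable_inverse hT.measurable (by simp [hTT.surjective.range_eq]) hT.measurable hTT
  have hh_bdd : ∀ᵐ x ∂μ, ‖h x‖ ≤ C := .of_forall hC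
  have hhT_bdd : ∀ᵐ x ∂μ, ‖h (T x)‖ ≤ C := .of_forall fun x => hC (T x)
  have hmirror : ∫ x, max (φ x) 0 * h (T x) ∂μ = ∫ x, max (-φ x) 0 * h x ∂μ := by
    rw [← hT.integral_comp hT_emb]
    simp only [hφT, hTT _]
  calc ∫ x, max (φ x) 0 * (h (T x) - h x) ∂μ
      = ∫ x, max (φ x) 0 * h (T x) ∂μ - ∫ x, max (φ x) 0 * h x ∂μ := by
        simp only [mul_sub]
        exact integral_sub (hφ.pos_part.mul_bdd (hh.comp_measurePreserving hT) hhT_bdd)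
          (hφ.pos_part.mul_bdd hh hh_bdd)
    _ = ∫ x, (max (-φ x) 0 - max (φ x) 0) * h x ∂μ := by
        simp only [hmirror, sub_mul]
        exact (integral_sub (hφ.neg_part.mul_bdd hh hh_bdd) (hφ.pos_part.mul_bdd hh hh_bdd)).symm
    _ = -∫ x, φ x * h x ∂μ := by
        rw [← integral_neg]
        congr with x
        rcases le_total (φ x) 0 with hx | hx <;> simp [hx]

theorem bounce_rotation_invariant_identity_general
    {d : ℕ}
    (μ : Measure (EuclideanSpace ℝ (Fin d)))
    (hrot : ∀ O : EuclideanSpace ℝ (Fin d) ≃ₗᵢ[ℝ] EuclideanSpace ℝ (Fin d),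
      Measure.map O μ = μ)
    (hmom : Integrable (fun y => ‖y‖) μ)
    (g : EuclideanSpace ℝ (Fin d))
    (h : EuclideanSpace ℝ (Fin d) → ℝ) (hmeas : Measurable h)
    (hbdd : ∃ B : ℝ, ∀ y, |h y| ≤ B) :
    ∫ y, max ⟪y, g⟫_ℝ 0 * (h (bounce g y) - h y) ∂μ = -∫ y, ⟪y, g⟫_ℝ * h y ∂μ := by
  obtain ⟨B, hB⟩ := hbdd
  have hinner : Integrable (fun y => ⟪y, g⟫_ℝ) μ :=
    ((integrable_norm_iff aestronglyMeasurable_id).1 hmom).inner_const g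
  exact integral_posPart_mul_comp_sub_eq_neg_integral_mul (measurePreserving_bounce hrot g)
    (bounce_involutive g) (inner_bounce_left g) hinner hmeas.aestronglyMeasurable hB

theorem bounce_rotation_invariant_identity
    {d : ℕ} (hd : 1 ≤ d)
    (μ : Measure (EuclideanSpace ℝ (Fin d))) [IsProbabilityMeasure μ]
    (hrot : ∀ O : EuclideanSpace ℝ (Fin d) ≃ₗᵢ[ℝ] EuclideanSpace ℝ (Fin d),
      Measure.map O μ = μ)
    (hmom : Integrable (fun y => ‖y‖) μ)
    (g : EuclideanSpace ℝ (Fin d))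
    (h : EuclideanSpace ℝ (Fin d) → ℝ) (hmeas : Measurable h)
    (hbdd : ∃ B : ℝ, ∀ y, |h y| ≤ B) :
    ∫ y, max ⟪y, g⟫_ℝ 0 * (h (bounce g y) - h y) ∂μ = -∫ y, ⟪y, g⟫_ℝ * h y ∂μ :=
  bounce_rotation_invariant_identity_general μ hrot hmom g h hmeas hbdd
end
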